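/- arXiv:2107.11873 — 3 statements merged into one kernel-verified Lean document; each statement's English description precedes it below -/
import Mathlib

section
/- Every incompatible collection is detected by some guessing game: Let Y, T be finite sets, let X = Y × T, and let υ : X → Y and τ : X → T be the coordinate projections. Define the score function f_υ(x,y) = δ_{υ(x),y} and the partial information map α_τ(t | x) = δ_{τ(x),t}. Then for every incompatible collection (N_t)_{t∈T} of measurements with outcome set Y on a finite-dimensional complex Hilbert space ℋ, there exists a state ensemble 𝓔 with label set X such that E^prior_{f_υ,α_τ}(𝓔; (N_t)) > E^post_{f_υ,α_τ}(𝓔). -/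
open scoped BigOperators
open Matrix
open scoped ComplexOrder

noncomputable section

abbrev Mat (d : ℕ) := Matrix (Fin d) (Fin d) ℂ

def IsStateEnsemble {d : ℕ} {X : Type*} [Fintype X] (E : X → Mat d) : Prop :=
  (∀ x, (E x).PosSemidef) ∧ (∑ x, (E x).trace) = 1

def IsMeasurement {d : ℕ} {Z : Type*} [Fintype Z] (M : Z → Mat d) : Prop :=
  (∀ z, (M z).PosSemidef) ∧ (∑ z, M z) = 1

def IsScore {X Y : Type*} (f : X → Y → ℝ) : Prop :=
  ∀ x y, 0 ≤ f x y ∧ f x y ≤ 1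

def IsPartialInfo {T X : Type*} [Fintype T] (α : T → X → ℝ) : Prop :=
  (∀ t x, 0 ≤ α t x) ∧ ∀ x, (∑ t, α t x) = 1

def IsPostProc {T Y Z : Type*} [Fintype Y] (ν : T → Y → Z → ℝ) : Prop :=
  (∀ t y z, 0 ≤ ν t y z) ∧ ∀ t z, (∑ y, ν t y z) = 1

def Pg {d : ℕ} {X : Type*} [Fintype X] (E M : X → Mat d) : ℝ :=
  ∑ x, ((E x) * (M x)).trace.re

def PgMax {d : ℕ} {X : Type*} [Fintype X] (E : X → Mat d) : ℝ :=
  sSup {p : ℝ | ∃ M : X → Mat d, IsMeasurement M ∧ p = Pg E M}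

def Escore {d : ℕ} {X Y : Type*} [Fintype X] [Fintype Y]
    (f : X → Y → ℝ) (E : X → Mat d) (M : Y → Mat d) : ℝ :=
  ∑ x, ∑ y, f x y * ((E x) * (M y)).trace.re

def EMax {d : ℕ} {X Y : Type*} [Fintype X] [Fintype Y]
    (f : X → Y → ℝ) (E : X → Mat d) : ℝ :=
  sSup {p : ℝ | ∃ M : Y → Mat d, IsMeasurement M ∧ p = Escore f E M}

def Epost {d : ℕ} {X Y T Z : Type*} [Fintype X] [Fintype Y] [Fintype T] [Fintype Z]
    (f : X → Y → ℝ) (α : T → X → ℝ) (E : X → Mat d)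
    (M : Z → Mat d) (ν : T → Y → Z → ℝ) : ℝ :=
  ∑ x, ∑ y, ∑ t, ∑ z, f x y * α t x * ν t y z * ((E x) * (M z)).trace.re

def EpostMax {d : ℕ} {X Y T : Type*} [Fintype X] [Fintype Y] [Fintype T]
    (f : X → Y → ℝ) (α : T → X → ℝ) (E : X → Mat d) : ℝ :=
  sSup {p : ℝ | ∃ (n : ℕ) (M : Fin n → Mat d) (ν : T → Y → Fin n → ℝ),
    IsMeasurement M ∧ IsPostProc ν ∧ p = Epost f α E M ν}

def Eprior {d : ℕ} {X Y T : Type*} [Fintype X] [Fintype Y] [Fintype T]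
    (f : X → Y → ℝ) (α : T → X → ℝ) (E : X → Mat d) (N : T → Y → Mat d) : ℝ :=
  ∑ x, ∑ y, ∑ t, f x y * α t x * ((E x) * (N t y)).trace.re

def EpriorMax {d : ℕ} {X Y T : Type*} [Fintype X] [Fintype Y] [Fintype T]
    (f : X → Y → ℝ) (α : T → X → ℝ) (E : X → Mat d) : ℝ :=
  sSup {p : ℝ | ∃ N : T → Y → Mat d, (∀ t, IsMeasurement (N t)) ∧ p = Eprior f α E N}

def IsCompatible {d : ℕ} {T Y : Type*} [Fintype T] [Fintype Y] (N : T → Y → Mat d) : Prop :=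
  ∃ (n : ℕ) (M : Fin n → Mat d) (ν : T → Y → Fin n → ℝ),
    IsMeasurement M ∧ IsPostProc ν ∧ ∀ t y, N t y = ∑ z, ν t y z • M z

def stdPost {T Y : Type*} [DecidableEq Y] : T → Y → (T → Y) → ℝ :=
  fun t y φ => if y = φ t then 1 else 0

def Δconst {d : ℕ} {X Y : Type*} [Fintype X] [Fintype Y]
    (f : X → Y → ℝ) (E : X → Mat d) : ℝ :=
  ∑ x, ∑ y, f x y * (E x).trace.re

def auxEns {d : ℕ} {X Y : Type*} [Fintype X] [Fintype Y]
    (f : X → Y → ℝ) (E : X → Mat d) (y : Y) : Mat d :=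
  (Δconst f E)⁻¹ • ∑ x, f x y • E x

def auxEnsPost {d : ℕ} {X Y T : Type*} [Fintype X] [Fintype Y] [Fintype T]
    (f : X → Y → ℝ) (α : T → X → ℝ) (E : X → Mat d) (φ : T → Y) : Mat d :=
  ((Fintype.card Y : ℝ) ^ (Fintype.card T - 1) * Δconst f E)⁻¹ •
    ∑ x, ∑ t, (f x (φ t) * α t x) • E x


/-! Compatible collections are exactly the marginals `t ↦ (y ↦ ∑_{φ t = y} J φ)` of measurements
`J` with outcomes `φ : T → Y`, so they form a compact convex set. Hahn–Banach separates an
incompatible `N` from it by a real functional, represented through the trace pairing by a family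
`H t y`. Replacing `H t y` by its Hermitian part does not change its pairing with Hermitian
collections, and adding `c • 1` shifts the pairing with every collection of measurements by the same
constant `c |T| d`; so we may assume `1 ≤ G t y`. Normalised, `E (y, t) ∝ G t y` is a state ensemble
whose prior score against `N`, and whose posterior score for any measurement and post-processing
(that is, against a compatible collection `C`), are the pairings of `G` with `N` and with `C`, up to
one positive factor. -/

open Matrix Finset
open scoped Matrix.Norms.L2Operator MatrixOrder ComplexStarModule

section

variable {d : ℕ}

section PosSemidef

lemma Matrix.PosSemidef.re_trace_nonneg {A : Mat d} (hA : A.PosSemidef) : 0 ≤ A.trace.re :=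
  (Complex.nonneg_iff.1 hA.trace_nonneg).1

lemma Matrix.PosSemidef.ofReal_re_trace {A : Mat d} (hA : A.PosSemidef) :
    (A.trace.re : ℂ) = A.trace :=
  (Complex.eq_re_of_ofReal_le (r := 0) (by simpa using hA.trace_nonneg)).symm

lemma natCast_le_re_trace {A : Mat d} (hA : 1 ≤ A) : (d : ℝ) ≤ A.trace.re := by
  simpa [trace_sub] using (le_iff.1 hA).re_trace_nonneg

lemma re_trace_conjTranspose_mul {A C : Mat d} (hC : C.IsHermitian) :
    (Aᴴ * C).trace.re = (A * C).trace.re := by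
  conv_lhs => rw [← hC.eq, ← conjTranspose_mul, trace_conjTranspose, trace_mul_comm]
  exact Complex.conj_re _

lemma one_le_add_smul_one {A : Mat d} (hA : IsSelfAdjoint A) {c : ℝ} (hc : ‖A‖ + 1 ≤ c) :
    1 ≤ A + c • 1 := by
  have h : (A + ‖A‖ • 1).PosSemidef := by
    simpa [le_iff, Algebra.algebraMap_eq_smul_one] using hA.neg_algebraMap_norm_le_self
  have hsplit : A + c • 1 - 1 = A + ‖A‖ • 1 + (c - (‖A‖ + 1)) • (1 : Mat d) := by
    simp only [sub_smul, add_smul, one_smul]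
    abel
  rw [le_iff, hsplit]
  exact h.add (PosSemidef.one.smul (sub_nonneg.2 hc))

end PosSemidef

section Measurement

variable {X Z : Type*} [Fintype X] [Fintype Z]

lemma IsMeasurement.le_one {M : Z → Mat d} (hM : IsMeasurement M) (z : Z) : M z ≤ 1 :=
  hM.2 ▸ single_le_sum (fun w _ => (hM.1 w).nonneg) (mem_univ z)

lemma convex_setOf_isMeasurement : Convex ℝ {M : Z → Mat d | IsMeasurement M} := by
  intro M hM M' hM' a b ha hb hab
  refine ⟨fun z => ((hM.1 z).smul ha).add ((hM'.1 z).smul hb), ?_⟩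
  simp only [Pi.add_apply, Pi.smul_apply, sum_add_distrib, ← smul_sum, hM.2, hM'.2, ← add_smul,
    hab, one_smul]

lemma isCompact_setOf_isMeasurement : IsCompact {M : Z → Mat d | IsMeasurement M} := by
  have hsum : Continuous fun M : Z → Mat d => ∑ z, M z :=
    continuous_finsetSum _ fun z _ => continuous_apply z
  have hclosed : IsClosed {M : Z → Mat d | IsMeasurement M} := by
    simp only [IsMeasurement, ← nonneg_iff_posSemidef, Set.ofPred_and, Set.ofPred_forall]
    exact (isClosed_iInter fun z => CStarAlgebra.isClosed_nonneg.preimage (continuous_apply z)).inter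
      (isClosed_eq hsum continuous_const)
  refine Metric.isCompact_of_isClosed_isBounded hclosed
    ((Metric.isBounded_closedBall (x := 0) (r := 1)).subset fun M hM => ?_)
  rw [Metric.mem_closedBall, dist_zero_right, pi_norm_le_iff_of_nonneg zero_le_one]
  exact fun z => (CStarAlgebra.norm_le_one_iff_of_nonneg _ (hM.1 z).nonneg).2 (hM.le_one z)

lemma isStateEnsemble_inv_smul {P : X → Mat d} (hP : ∀ x, 0 ≤ P x)
    (hS : ∑ x, (P x).trace.re ≠ 0) :
    IsStateEnsemble fun x => (∑ x, (P x).trace.re)⁻¹ • P x := by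
  refine ⟨fun x => (hP x).posSemidef.smul
    (inv_nonneg.2 (sum_nonneg fun x _ => (hP x).posSemidef.re_trace_nonneg)), ?_⟩
  have hsum : ∑ x, (P x).trace = ((∑ x, (P x).trace.re : ℝ) : ℂ) := by
    rw [Complex.ofReal_sum]
    exact sum_congr rfl fun x _ => (hP x).posSemidef.ofReal_re_trace.symm
  simp only [trace_smul]
  rw [← smul_sum, hsum, Complex.real_smul, ← Complex.ofReal_mul, inv_mul_cancel₀ hS,
    Complex.ofReal_one]

end Measurement

section Marginal

variable {T Y : Type*} [Fintype T] [Fintype Y] [DecidableEq T] [DecidableEq Y]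

lemma sum_prod_filter_apply_eq {R : Type*} [CommSemiring R] {p : T → Y → R}
    (hp : ∀ t, ∑ y, p t y = 1) (t : T) (y : Y) :
    ∑ φ : T → Y with φ t = y, ∏ t', p t' (φ t') = p t y := by
  have hfilter : ({φ : T → Y | φ t = y} : Finset _) =
      Fintype.piFinset fun t' => if t' = t then {y} else univ := by
    ext φ
    simp only [mem_filter, mem_univ, true_and, Fintype.mem_piFinset]
    refine ⟨fun h t' => ?_, fun h => by simpa using h t⟩
    split_ifs with ht <;> simp [ht, h]
  rw [hfilter, ← prod_univ_sum]
  calc ∏ t', ∑ j ∈ (if t' = t then {y} else univ), p t' j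
      = ∏ t', if t' = t then p t y else 1 :=
        prod_congr rfl fun t' _ => by split_ifs with h <;> simp [h, hp]
    _ = p t y := by simp

def marginal : ((T → Y) → Mat d) →ₗ[ℝ] T → Y → Mat d :=
  LinearMap.pi fun t => LinearMap.pi fun y => ∑ φ : T → Y with φ t = y, LinearMap.proj φ

@[simp]
lemma marginal_apply (J : (T → Y) → Mat d) (t : T) (y : Y) :
    marginal J t y = ∑ φ : T → Y with φ t = y, J φ := by
  simp [marginal]

lemma IsMeasurement.marginal {J : (T → Y) → Mat d} (hJ : IsMeasurement J) (t : T) :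
    IsMeasurement (marginal J t) :=
  ⟨fun y => by simpa using posSemidef_sum _ fun φ _ => hJ.1 φ, by
    simpa [sum_fiberwise] using hJ.2⟩

lemma isCompatible_iff_exists_marginal {C : T → Y → Mat d} :
    IsCompatible C ↔ ∃ J : (T → Y) → Mat d, IsMeasurement J ∧ marginal J = C := by
  constructor
  · rintro ⟨n, M, ν, hM, hν, hC⟩
    -- answer every question `t` independently, with the post-processing `ν t · z`
    refine ⟨fun φ => ∑ z, (∏ t, ν t (φ t) z) • M z, ⟨fun φ => posSemidef_sum _ fun z _ =>
      (hM.1 z).smul (prod_nonneg fun t _ => hν.1 t (φ t) z), ?_⟩, ?_⟩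
    · rw [sum_comm]
      simp_rw [← sum_smul]
      refine (sum_congr rfl fun z _ => ?_).trans hM.2
      rw [← Fintype.prod_sum (fun t y => ν t y z)]
      simp [hν.2]
    · funext t y
      rw [marginal_apply, hC, sum_comm]
      simp_rw [← sum_smul, sum_prod_filter_apply_eq (fun t => hν.2 t _)]
  · rintro ⟨J, hJ, rfl⟩
    let e := Fintype.equivFin (T → Y)
    refine ⟨Fintype.card (T → Y), J ∘ e.symm, fun t y z => if e.symm z t = y then 1 else 0,
      ⟨fun z => hJ.1 _, by rw [← hJ.2]; exact e.symm.sum_comp J⟩,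
      ⟨fun _ _ _ => by positivity, fun t z => by simp⟩, fun t y => ?_⟩
    rw [marginal_apply, sum_filter, ← e.symm.sum_comp]
    simp [ite_smul]

lemma setOf_isCompatible_eq_image :
    {C : T → Y → Mat d | IsCompatible C} = marginal '' {J | IsMeasurement J} := by
  ext C
  exact isCompatible_iff_exists_marginal

lemma IsCompatible.isMeasurement {C : T → Y → Mat d} (hC : IsCompatible C) (t : T) :
    IsMeasurement (C t) := by
  obtain ⟨J, hJ, rfl⟩ := isCompatible_iff_exists_marginal.1 hC
  exact hJ.marginal t

lemma nonempty_and_pos_of_not_isCompatible {N : T → Y → Mat d}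
    (hN : ∀ t, IsMeasurement (N t)) (hinc : ¬ IsCompatible N) :
    Nonempty T ∧ Nonempty Y ∧ 0 < d := by
  have hd : 0 < d := by
    refine Nat.pos_of_ne_zero fun hd => hinc ?_
    subst hd
    exact isCompatible_iff_exists_marginal.2
      ⟨0, ⟨fun _ => .zero, Subsingleton.elim _ _⟩, Subsingleton.elim _ _⟩
  have hT : Nonempty T := by
    by_contra! hT
    exact hinc (isCompatible_iff_exists_marginal.2
      ⟨fun _ => 1, ⟨fun _ => .one, by simp⟩, funext isEmptyElim⟩)
  obtain ⟨t⟩ := hT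
  refine ⟨⟨t⟩, ?_, hd⟩
  by_contra! hY
  have : NeZero d := ⟨hd.ne'⟩
  simpa using (hN t).2

end Marginal

section TracePairing

variable {T Y : Type*} [Fintype T] [Fintype Y]

def tracePairing : LinearMap.BilinForm ℝ (T → Y → Mat d) :=
  LinearMap.mk₂ ℝ (fun A B => ∑ t, ∑ y, (A t y * B t y).trace.re)
    (fun A A' B => by simp [add_mul, sum_add_distrib])
    (fun c A B => by simp [mul_sum])
    (fun A B B' => by simp [mul_add, sum_add_distrib])
    (fun c A B => by simp [mul_sum])

@[simp]
lemma tracePairing_apply (A B : T → Y → Mat d) :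
    tracePairing A B = ∑ t, ∑ y, (A t y * B t y).trace.re := rfl

lemma tracePairing_isSymm : (tracePairing (d := d) (T := T) (Y := Y)).IsSymm :=
  LinearMap.BilinForm.isSymm_def.2 fun A B => by simp [trace_mul_comm (A _ _)]

lemma tracePairing_nondegenerate : (tracePairing (d := d) (T := T) (Y := Y)).Nondegenerate := by
  refine tracePairing_isSymm.isRefl.nondegenerate_iff_separatingLeft.2 fun A hA => ?_
  have hpsd t y := posSemidef_conjTranspose_mul_self (A t y)
  have hsum := hA fun t y => (A t y)ᴴ
  simp_rw [tracePairing_apply, trace_mul_comm (A _ _)] at hsum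
  rw [sum_eq_zero_iff_of_nonneg fun t _ => sum_nonneg fun y _ => (hpsd t y).re_trace_nonneg]
    at hsum
  funext t y
  have hre := (sum_eq_zero_iff_of_nonneg fun y _ => (hpsd t y).re_trace_nonneg).1
    (hsum t (mem_univ t)) y (mem_univ y)
  rw [Pi.zero_apply, Pi.zero_apply, ← trace_conjTranspose_mul_self_eq_zero_iff,
    ← (hpsd t y).ofReal_re_trace, hre, Complex.ofReal_zero]

lemma tracePairing_realPart (H : T → Y → Mat d) {C : T → Y → Mat d}
    (hC : ∀ t y, (C t y).IsHermitian) :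
    tracePairing (fun t y => (ℜ (H t y) : Mat d)) C = tracePairing H C := by
  simp only [tracePairing_apply, realPart_apply_coe, smul_mul, add_mul, trace_smul, trace_add,
    Complex.smul_re, Complex.add_re, star_eq_conjTranspose, re_trace_conjTranspose_mul (hC _ _)]
  congr! 2 with t _ y _
  ring

lemma tracePairing_add_smul_one (H : T → Y → Mat d) {C : T → Y → Mat d}
    (hC : ∀ t, ∑ y, C t y = 1) (c : ℝ) :
    tracePairing (fun t y => H t y + c • 1) C = tracePairing H C + c * (Fintype.card T * d) := by
  have hd t : ∑ y, (C t y).trace.re = d := by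
    rw [← Complex.re_sum, ← trace_sum, hC t, trace_one]
    simp
  simp only [tracePairing_apply, add_mul, smul_mul, one_mul, trace_add, trace_smul,
    Complex.add_re, Complex.smul_re, smul_eq_mul, sum_add_distrib, ← mul_sum, hd]
  simp

variable [DecidableEq T] [DecidableEq Y]

lemma exists_tracePairing_separating {N : T → Y → Mat d} (hinc : ¬ IsCompatible N) :
    ∃ (H : T → Y → Mat d) (u : ℝ),
      (∀ C, IsCompatible C → tracePairing H C < u) ∧ u < tracePairing H N := by
  replace hinc : N ∉ marginal '' {J | IsMeasurement J} := by
    rwa [← setOf_isCompatible_eq_image]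
  obtain ⟨f, u, hf, hfN⟩ := geometric_hahn_banach_closed_point
    (convex_setOf_isMeasurement.linear_image marginal)
    (isCompact_setOf_isMeasurement.image marginal.continuous_of_finiteDimensional).isClosed hinc
  refine ⟨(tracePairing.toDual tracePairing_nondegenerate).symm f.toLinearMap, u,
    fun C hC => ?_, by simpa using hfN⟩
  simpa using hf C (by rw [← setOf_isCompatible_eq_image]; exact hC)

lemma exists_one_le_tracePairing_separating {N : T → Y → Mat d}
    (hN : ∀ t, IsMeasurement (N t)) (hinc : ¬ IsCompatible N) :
    ∃ (G : T → Y → Mat d) (u : ℝ), (∀ t y, 1 ≤ G t y) ∧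
      (∀ C, IsCompatible C → tracePairing G C < u) ∧ u < tracePairing G N := by
  obtain ⟨H, u, hH, hHN⟩ := exists_tracePairing_separating hinc
  set R : T → Y → Mat d := fun t y => ℜ (H t y)
  set c := ‖R‖ + 1
  have hshift {C : T → Y → Mat d} (hC : ∀ t, IsMeasurement (C t)) :
      tracePairing (fun t y => R t y + c • 1) C = tracePairing H C + c * (Fintype.card T * d) := by
    rw [tracePairing_add_smul_one _ (fun t => (hC t).2),
      tracePairing_realPart _ fun t y => ((hC t).1 y).isHermitian]
  refine ⟨fun t y => R t y + c • 1, u + c * (Fintype.card T * d),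
    fun t y => one_le_add_smul_one (ℜ (H t y)).2 ?_, fun C hC => ?_, ?_⟩
  · grw [norm_le_pi_norm (R t) y, norm_le_pi_norm R t]
  · rw [hshift hC.isMeasurement]
    linarith [hH C hC]
  · rw [hshift hN]
    linarith

end TracePairing

section Game

variable {X Y T : Type*} [Fintype X] [Fintype Y] [Fintype T]

lemma Epost_eq_Eprior {Z : Type*} [Fintype Z] (f : X → Y → ℝ) (α : T → X → ℝ) (E : X → Mat d)
    (M : Z → Mat d) (ν : T → Y → Z → ℝ) :
    Epost f α E M ν = Eprior f α E fun t y => ∑ z, ν t y z • M z := by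
  simp only [Epost, Eprior, mul_sum, trace_sum, Complex.re_sum, mul_smul_comm, trace_smul,
    Complex.smul_re, smul_eq_mul, mul_assoc]

lemma EpostMax_le [Nonempty Y] (f : X → Y → ℝ) (α : T → X → ℝ) (E : X → Mat d) {b : ℝ}
    (h : ∀ C : T → Y → Mat d, IsCompatible C → Eprior f α E C ≤ b) : EpostMax f α E ≤ b := by
  classical
  obtain ⟨y₀⟩ := ‹Nonempty Y›
  refine csSup_le ⟨_, 1, fun _ => 1, fun _ y _ => if y = y₀ then 1 else 0,
    ⟨fun _ => .one, by simp⟩, ⟨fun _ _ _ => by positivity, fun _ _ => by simp⟩, rfl⟩ ?_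
  rintro _ ⟨n, M, ν, hM, hν, rfl⟩
  rw [Epost_eq_Eprior]
  exact h _ ⟨n, M, ν, hM, hν, fun _ _ => rfl⟩

variable [DecidableEq Y] [DecidableEq T]

lemma Eprior_coordinates (E : Y × T → Mat d) (C : T → Y → Mat d) :
    Eprior (fun x y => if x.1 = y then (1 : ℝ) else 0) (fun t x => if x.2 = t then (1 : ℝ) else 0)
      E C = tracePairing (fun t y => E (y, t)) C := by
  rw [Eprior, Fintype.sum_prod_type, sum_comm]
  simp [ite_mul]

lemma Eprior_coordinates_smul (c : ℝ) (G C : T → Y → Mat d) :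
    Eprior (fun x y => if x.1 = y then (1 : ℝ) else 0) (fun t x => if x.2 = t then (1 : ℝ) else 0)
      (fun x : Y × T => c • G x.2 x.1) C = c * tracePairing G C := by
  rw [Eprior_coordinates]
  exact LinearMap.map_smul₂ tracePairing c G C

end Game

end

theorem stmt12 {d : ℕ} {Y T : Type} [Fintype Y] [Fintype T] [DecidableEq Y] [DecidableEq T]
    (N : T → Y → Mat d) (hN : ∀ t, IsMeasurement (N t))
    (hinc : ¬ IsCompatible N) :
    ∃ E : Y × T → Mat d, IsStateEnsemble E ∧
      Eprior (fun x y => if x.1 = y then (1 : ℝ) else 0)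
          (fun t x => if x.2 = t then (1 : ℝ) else 0) E N
        > EpostMax (fun x y => if x.1 = y then (1 : ℝ) else 0)
            (fun t x => if x.2 = t then (1 : ℝ) else 0) E := by
  obtain ⟨hT, hY, hd⟩ := nonempty_and_pos_of_not_isCompatible hN hinc
  obtain ⟨G, u, hG, hcompat, hNu⟩ := exists_one_le_tracePairing_separating hN hinc
  set S := ∑ x : Y × T, (G x.2 x.1).trace.re
  have hS : 0 < S := calc
    0 < ∑ _x : Y × T, (d : ℝ) := by simp [hd, Fintype.card_pos]
    _ ≤ S := sum_le_sum fun x _ => natCast_le_re_trace (hG x.2 x.1)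
  refine ⟨fun x => S⁻¹ • G x.2 x.1,
    isStateEnsemble_inv_smul (fun x => PosSemidef.one.nonneg.trans (hG x.2 x.1)) hS.ne', ?_⟩
  rw [gt_iff_lt, Eprior_coordinates_smul]
  calc EpostMax _ _ _ ≤ S⁻¹ * u := EpostMax_le _ _ _ fun C hC => by
        rw [Eprior_coordinates_smul]
        gcongr
        exact (hcompat C hC).le
    _ < S⁻¹ * tracePairing G N := by gcongr
end
end

section
/- Maximal average score under irreducible symmetry: Let G be a finite group acting on finite sets X, Y and T, let f : X × Y → [0,1] and α satisfy f(g·x, g·y) = f(x,y) and α(g·t | g·x) = α(t | x) for all g, x, y, t, let 𝓔 be a state ensemble with label set X on a d-dimensional complex Hilbert space ℋ with Δ(𝓔,f) ≠ 0, and let g ↦ U(g) be a map from G to unitary operators on ℋ such that U(g)·𝓔(x)·U(g)* = 𝓔(g·x) for all g, x, such that A ↦ U(g)·A·U(g)* defines a group action of G on L(ℋ), and such that every operator A ∈ L(ℋ) with U(g)·A·U(g)* = A for all g ∈ G is a scalar multiple of the identity (irreducibility). Let Λ(𝓔_{f,α}) be the largest among all eigenvalues of the operators 𝓔_{f,α}(φ),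 φ ∈ Y^T. Then E^post_{f,α}(𝓔) = d·|Y|^{|T|−1}·Δ(𝓔,f)·Λ(𝓔_{f,α}). -/
/-!
Posterior information can be simulated before measuring: a measurement `M` followed by the
post-processing `ν` scores exactly as the single measurement `N φ = ∑ z, (∏ t, ν t (φ t) z) • M z`
with outcomes `φ : T → Y`, read out as `φ t` once `t` is announced. The score of such an `N` is
`∑ φ, re tr (A φ * N φ)` with `A φ = ∑ x, ∑ t, (f x (φ t) * α t x) • E x`, and `A φ` is
`c • auxEnsPost f α E φ` for `c = |Y| ^ (|T| - 1) * Δ`. Bounding each term by the top eigenvalue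
`c * Λ` and using `∑ φ, N φ = 1` gives `EpostMax ≤ d * c * Λ`.

For the converse, let `P` be the projection onto a top eigenvector of `A φ₀` and twirl it:
`N φ = (d / |G|) • ∑ {g | g • φ₀ = φ}, U g * P * (U g)ᴴ`. The full twirl `∑ g, U g * P * (U g)ᴴ`
commutes with every `U h`, so by irreducibility it is `(|G| / d) • 1` and `N` is a measurement;
covariance `U g * A φ * (U g)ᴴ = A (g • φ)` makes each of the `|G|` summands score `c * Λ`.
-/

open scoped BigOperators
open Matrix
open scoped ComplexOrder

noncomputable section

namespace Matrix

variable {n 𝕜 : Type*} [Fintype n]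

lemma PosSemidef.trace_mul_nonneg [RCLike 𝕜] {A B : Matrix n n 𝕜} (hA : A.PosSemidef)
    (hB : B.PosSemidef) : 0 ≤ (A * B).trace := by
  classical
  open scoped MatrixOrder in
  obtain ⟨C, rfl⟩ := CStarAlgebra.nonneg_iff_eq_star_mul_self.mp hB.nonneg
  rw [← Matrix.mul_assoc, trace_mul_cycle, star_eq_conjTranspose]
  exact (hA.mul_mul_conjTranspose_same C).trace_nonneg

lemma IsHermitian.posSemidef_smul_one_sub [DecidableEq n] {A : Matrix n n ℂ}
    (hA : A.IsHermitian) {μ : ℝ}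
    (hμ : ∀ (l : ℝ) (v : n → ℂ), v ≠ 0 → A *ᵥ v = (l : ℂ) • v → l ≤ μ) :
    ((μ : ℂ) • 1 - A).PosSemidef := by
  have hD : ((μ : ℂ) • 1 - A).IsHermitian :=
    IsHermitian.sub (by simp [IsHermitian, conjTranspose_smul]) hA
  refine hD.posSemidef_iff_eigenvalues_nonneg.mpr fun j => ?_
  have hw : (hD.eigenvectorBasis j).ofLp ≠ 0 := fun h0 =>
    hD.eigenvectorBasis.orthonormal.ne_zero j (by ext i; exact congrFun h0 i)
  have h := hD.mulVec_eigenvectorBasis j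
  generalize ((hD.eigenvectorBasis j).ofLp : n → ℂ) = w at h hw
  rw [sub_mulVec, smul_mulVec, one_mulVec, RCLike.real_smul_eq_coe_smul (K := ℂ)] at h
  have hAw : A *ᵥ w = ((μ - hD.eigenvalues j : ℝ) : ℂ) • w := by
    push_cast
    linear_combination (norm := module) -h
  simpa using hμ _ w hw hAw

lemma IsHermitian.re_trace_mul_le [DecidableEq n] {A B : Matrix n n ℂ} (hA : A.IsHermitian)
    {μ : ℝ} (hμ : ∀ (l : ℝ) (v : n → ℂ), v ≠ 0 → A *ᵥ v = (l : ℂ) • v → l ≤ μ)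
    (hB : B.PosSemidef) : (A * B).trace.re ≤ μ * B.trace.re := by
  have h := (Complex.le_def.mp ((hA.posSemidef_smul_one_sub hμ).trace_mul_nonneg hB)).1
  simpa [sub_mul, trace_sub, trace_smul] using h

lemma exists_posSemidef_trace_eq_one_of_mulVec_eq [RCLike 𝕜] {A : Matrix n n 𝕜} {v : n → 𝕜}
    (hv : v ≠ 0) {μ : 𝕜} (hAv : A *ᵥ v = μ • v) :
    ∃ P : Matrix n n 𝕜, P.PosSemidef ∧ P.trace = 1 ∧ (A * P).trace = μ := by
  set s := star v ⬝ᵥ v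
  have hs : s ≠ 0 := fun h => hv (dotProduct_star_self_eq_zero.mp h)
  have hs0 : 0 ≤ s⁻¹ := inv_nonneg.mpr (dotProduct_star_self_nonneg v)
  refine ⟨s⁻¹ • vecMulVec v (star v), (posSemidef_vecMulVec_self_star v).smul hs0, ?_, ?_⟩
  · rw [trace_smul, trace_vecMulVec, dotProduct_comm, smul_eq_mul, inv_mul_cancel₀ hs]
  · rw [mul_smul_comm, mul_vecMulVec, trace_smul, trace_vecMulVec, hAv, smul_dotProduct,
      dotProduct_comm, smul_eq_mul, smul_eq_mul, mul_left_comm, inv_mul_cancel₀ hs, mul_one]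

lemma inv_smul_mulVec_eq_iff {A : Matrix n n ℂ} {c : ℝ} (hc : c ≠ 0) (l : ℝ) (v : n → ℂ) :
    (c⁻¹ • A) *ᵥ v = (l : ℂ) • v ↔ A *ᵥ v = ((c * l : ℝ) : ℂ) • v := by
  rw [smul_mulVec, inv_smul_eq_iff₀ hc, Complex.ofReal_mul, mul_smul]
  simp only [Complex.coe_smul]

lemma trace_conj_mul_conj {R : Type*} [DecidableEq n] [CommSemiring R]
    {U V : Matrix n n R} (hVU : V * U = 1) (A B : Matrix n n R) :
    (U * A * V * (U * B * V)).trace = (A * B).trace := by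
  have h : U * A * V * (U * B * V) = U * (A * B) * V := by
    simp only [mul_assoc, ← mul_assoc V U, hVU, one_mul]
  rw [h, trace_mul_cycle, ← mul_assoc, hVU, one_mul]

end Matrix

lemma Fintype.sum_apply_mul_prod_of_sum_eq_one {T Y R : Type*} [Fintype T] [DecidableEq T]
    [Fintype Y] [CommSemiring R] (F : Y → R) (p : T → Y → R) (hp : ∀ t, ∑ y, p t y = 1) (t : T) :
    ∑ φ : T → Y, F (φ t) * ∏ s, p s (φ s) = ∑ y, F y * p t y := by
  calc ∑ φ : T → Y, F (φ t) * ∏ s, p s (φ s)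
      = ∑ φ : T → Y, ∏ s, (if s = t then F (φ s) else 1) * p s (φ s) := by
        refine Finset.sum_congr rfl fun φ _ => ?_
        rw [Finset.prod_mul_distrib, Finset.prod_ite_eq', if_pos (Finset.mem_univ t)]
    _ = ∏ s, ∑ y, (if s = t then F y else 1) * p s y :=
        (Fintype.prod_sum fun s y => (if s = t then F y else 1) * p s y).symm
    _ = ∑ y, F y * p t y := by
        rw [Fintype.prod_eq_single t fun s hs => by simp [hs, hp s]]
        simp

section Score

variable {d : ℕ} {X Y T : Type*} [Fintype X] [Fintype Y] [Fintype T]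

def scoreOp (f : X → Y → ℝ) (α : T → X → ℝ) (E : X → Mat d) (φ : T → Y) : Mat d :=
  ∑ x, ∑ t, (f x (φ t) * α t x) • E x

variable {f : X → Y → ℝ} {α : T → X → ℝ} {E : X → Mat d}

lemma auxEnsPost_eq_inv_smul_scoreOp (φ : T → Y) :
    auxEnsPost f α E φ
      = ((Fintype.card Y : ℝ) ^ (Fintype.card T - 1) * Δconst f E)⁻¹ • scoreOp f α E φ :=
  rfl

omit [Fintype Y] in
lemma isHermitian_scoreOp (hE : ∀ x, (E x).IsHermitian) (φ : T → Y) :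
    (scoreOp f α E φ).IsHermitian :=
  isSelfAdjoint_sum _ fun x _ => isSelfAdjoint_sum _ fun _ _ => (hE x).smul (.all _)

omit [Fintype Y] in
lemma re_trace_scoreOp_mul (φ : T → Y) (B : Mat d) :
    (scoreOp f α E φ * B).trace.re = ∑ x, ∑ t, f x (φ t) * α t x * (E x * B).trace.re := by
  simp [scoreOp, Matrix.sum_mul, Matrix.trace_sum, Complex.re_sum]

lemma Epost_eq_sum {Z : Type*} [Fintype Z] (M : Z → Mat d) (ν : T → Y → Z → ℝ) :
    Epost f α E M ν = ∑ x, ∑ t, ∑ z, α t x * (E x * M z).trace.re * ∑ y, f x y * ν t y z := by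
  unfold Epost
  refine Finset.sum_congr rfl fun x _ => ?_
  rw [Finset.sum_comm]
  refine Finset.sum_congr rfl fun t _ => ?_
  rw [Finset.sum_comm]
  refine Finset.sum_congr rfl fun z _ => ?_
  rw [Finset.mul_sum]
  exact Finset.sum_congr rfl fun y _ => by ring

lemma Epost_stdPost_eq_sum [DecidableEq T] [DecidableEq Y] (N : (T → Y) → Mat d) :
    Epost f α E N stdPost = ∑ φ, (scoreOp f α E φ * N φ).trace.re := by
  simp only [Epost_eq_sum, stdPost, mul_ite, mul_one, mul_zero, Finset.sum_ite_eq',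
    Finset.mem_univ, if_true, re_trace_scoreOp_mul]
  conv_rhs => rw [Finset.sum_comm]
  refine Finset.sum_congr rfl fun x _ => ?_
  rw [Finset.sum_comm]
  exact Finset.sum_congr rfl fun φ _ => Finset.sum_congr rfl fun t _ => by ring

def effectiveMeas {Z : Type*} [Fintype Z] (M : Z → Mat d) (ν : T → Y → Z → ℝ) (φ : T → Y) :
    Mat d :=
  ∑ z, (∏ t, ν t (φ t) z) • M z

lemma isMeasurement_effectiveMeas [DecidableEq T] {Z : Type*} [Fintype Z] {M : Z → Mat d}
    {ν : T → Y → Z → ℝ} (hM : IsMeasurement M) (hν : IsPostProc ν) :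
    IsMeasurement (effectiveMeas M ν) := by
  refine ⟨fun φ => posSemidef_sum _ fun z _ =>
    (hM.1 z).smul (Finset.prod_nonneg fun t _ => hν.1 t (φ t) z), ?_⟩
  rw [← hM.2]
  unfold effectiveMeas
  rw [Finset.sum_comm]
  refine Finset.sum_congr rfl fun z _ => ?_
  rw [← Finset.sum_smul, ← Fintype.prod_sum fun t y => ν t y z]
  simp [hν.2]

lemma Epost_eq_Epost_effectiveMeas [DecidableEq T] [DecidableEq Y] {Z : Type*} [Fintype Z]
    (M : Z → Mat d) {ν : T → Y → Z → ℝ} (hν : IsPostProc ν) :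
    Epost f α E M ν = Epost f α E (effectiveMeas M ν) stdPost := by
  simp only [Epost_eq_sum, stdPost, mul_ite, mul_one, mul_zero, Finset.sum_ite_eq',
    Finset.mem_univ, if_true]
  refine Finset.sum_congr rfl fun x _ => Finset.sum_congr rfl fun t _ => ?_
  have hmarg (z : Z) : ∑ y, f x y * ν t y z = ∑ φ : T → Y, f x (φ t) * ∏ s, ν s (φ s) z :=
    (Fintype.sum_apply_mul_prod_of_sum_eq_one (f x) (fun s y => ν s y z)
      (fun s => hν.2 s z) t).symm
  simp only [effectiveMeas, Matrix.trace_sum, Complex.re_sum, mul_smul_comm,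
    Matrix.trace_smul, Complex.real_smul, Complex.re_ofReal_mul, hmarg, Finset.mul_sum,
    Finset.sum_mul]
  rw [Finset.sum_comm]
  exact Finset.sum_congr rfl fun φ _ => Finset.sum_congr rfl fun z _ => by ring

lemma Epost_stdPost_le [DecidableEq T] [DecidableEq Y] (hE : ∀ x, (E x).IsHermitian) {μ : ℝ}
    (hμ : ∀ (φ : T → Y) (l : ℝ) (v : Fin d → ℂ), v ≠ 0 →
      scoreOp f α E φ *ᵥ v = (l : ℂ) • v → l ≤ μ)
    {N : (T → Y) → Mat d} (hN : IsMeasurement N) :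
    Epost f α E N stdPost ≤ d * μ :=
  calc Epost f α E N stdPost = ∑ φ, (scoreOp f α E φ * N φ).trace.re := Epost_stdPost_eq_sum N
    _ ≤ ∑ φ, μ * (N φ).trace.re := Finset.sum_le_sum fun φ _ =>
        (isHermitian_scoreOp hE φ).re_trace_mul_le (hμ φ) (hN.1 φ)
    _ = d * μ := by
        rw [← Finset.mul_sum, ← Complex.re_sum, ← Matrix.trace_sum, hN.2]
        simp [mul_comm]

end Score

section Covariance

variable {G : Type*} [Group G]

lemma smul_sum_conj_eq_smul_one [Fintype G] {d : ℕ} {U : G → Mat d}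
    (hU : ∀ g, (U g)ᴴ * U g = 1)
    (hactmul : ∀ (g g' : G) (A : Mat d),
      U (g * g') * A * (U (g * g'))ᴴ = U g * (U g' * A * (U g')ᴴ) * (U g)ᴴ)
    (hirr : ∀ A : Mat d, (∀ g, U g * A * (U g)ᴴ = A) → ∃ c : ℂ, A = c • (1 : Mat d))
    (P : Mat d) :
    (d : ℂ) • ∑ g, U g * P * (U g)ᴴ = ((Fintype.card G : ℂ) * P.trace) • 1 := by
  have hinv (h : G) : U h * (∑ g, U g * P * (U g)ᴴ) * (U h)ᴴ = ∑ g, U g * P * (U g)ᴴ := by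
    simp only [Matrix.mul_sum, Matrix.sum_mul, ← hactmul]
    exact Fintype.sum_equiv (Equiv.mulLeft h) _ _ fun g => rfl
  obtain ⟨c, hc⟩ := hirr _ hinv
  have htrace : c * d = Fintype.card G * P.trace := by
    have := congrArg Matrix.trace hc
    simp only [Matrix.trace_sum, Matrix.trace_mul_cycle, hU, Matrix.one_mul, Matrix.trace_smul,
      Matrix.trace_one] at this
    simpa using this.symm
  rw [hc, smul_smul, mul_comm, htrace]

variable {d : ℕ} {X Y T : Type*} [Fintype X] [Fintype Y] [Fintype T]
  [MulAction G X] [MulAction G Y] [MulAction G T]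
  {f : X → Y → ℝ} {α : T → X → ℝ} {E : X → Mat d}

def actFun (g : G) (φ : T → Y) : T → Y := fun t => g • φ (g⁻¹ • t)

omit [Fintype Y] in
lemma conj_scoreOp (hfinv : ∀ (g : G) (x : X) (y : Y), f (g • x) (g • y) = f x y)
    (hαinv : ∀ (g : G) (t : T) (x : X), α (g • t) (g • x) = α t x)
    {U : G → Mat d} (hcov : ∀ (g : G) (x : X), U g * E x * (U g)ᴴ = E (g • x))
    (g : G) (φ : T → Y) :
    U g * scoreOp f α E φ * (U g)ᴴ = scoreOp f α E (actFun g φ) := by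
  simp only [scoreOp, Matrix.mul_sum, Matrix.sum_mul, mul_smul_comm, Matrix.smul_mul, hcov]
  refine Fintype.sum_equiv (MulAction.toPerm g) _ _ fun x => ?_
  refine Fintype.sum_equiv (MulAction.toPerm g) _ _ fun t => ?_
  simp [actFun, hfinv, hαinv]

variable [Fintype G] [DecidableEq T] [DecidableEq Y]

def twirlMeas (U : G → Mat d) (P : Mat d) (φ₀ φ : T → Y) : Mat d :=
  ((d : ℝ) / Fintype.card G) • ∑ g with actFun g φ₀ = φ, U g * P * (U g)ᴴ

lemma isMeasurement_twirlMeas {U : G → Mat d} (hU : ∀ g, (U g)ᴴ * U g = 1)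
    (hactmul : ∀ (g g' : G) (A : Mat d),
      U (g * g') * A * (U (g * g'))ᴴ = U g * (U g' * A * (U g')ᴴ) * (U g)ᴴ)
    (hirr : ∀ A : Mat d, (∀ g, U g * A * (U g)ᴴ = A) → ∃ c : ℂ, A = c • (1 : Mat d))
    {P : Mat d} (hP : P.PosSemidef) (hP1 : P.trace = 1) (φ₀ : T → Y) :
    IsMeasurement (twirlMeas U P φ₀) := by
  refine ⟨fun φ => (posSemidef_sum _ fun g _ => hP.mul_mul_conjTranspose_same (U g)).smul
    (by positivity), ?_⟩
  have hG : (Fintype.card G : ℂ) ≠ 0 := by exact_mod_cast Fintype.card_ne_zero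
  have h := smul_sum_conj_eq_smul_one hU hactmul hirr P
  rw [hP1, mul_one] at h
  calc ∑ φ, twirlMeas U P φ₀ φ = ((d : ℝ) / Fintype.card G) • ∑ g, U g * P * (U g)ᴴ := by
        simp only [twirlMeas, ← Finset.smul_sum, Finset.sum_fiberwise]
    _ = (Fintype.card G : ℂ)⁻¹ • ((d : ℂ) • ∑ g, U g * P * (U g)ᴴ) := by
        rw [← Complex.coe_smul, smul_smul]
        push_cast
        ring_nf
    _ = 1 := by rw [h, smul_smul, inv_mul_cancel₀ hG, one_smul]

lemma Epost_twirlMeas (hfinv : ∀ (g : G) (x : X) (y : Y), f (g • x) (g • y) = f x y)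
    (hαinv : ∀ (g : G) (t : T) (x : X), α (g • t) (g • x) = α t x)
    {U : G → Mat d} (hU : ∀ g, (U g)ᴴ * U g = 1)
    (hcov : ∀ (g : G) (x : X), U g * E x * (U g)ᴴ = E (g • x)) (P : Mat d) (φ₀ : T → Y) :
    Epost f α E (twirlMeas U P φ₀) stdPost = d * (scoreOp f α E φ₀ * P).trace.re := by
  have hterm (φ : T → Y) : (scoreOp f α E φ * twirlMeas U P φ₀ φ).trace.re
      = d / Fintype.card G * ∑ g : G with actFun g φ₀ = φ, (scoreOp f α E φ₀ * P).trace.re := by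
    rw [twirlMeas, mul_smul_comm, Matrix.trace_smul, Complex.smul_re, smul_eq_mul,
      Matrix.mul_sum, Matrix.trace_sum, Complex.re_sum]
    congr 1
    refine Finset.sum_congr rfl fun g hg => ?_
    rw [← (Finset.mem_filter.mp hg).2, ← conj_scoreOp hfinv hαinv hcov,
      Matrix.trace_conj_mul_conj (hU g)]
  have hG : (Fintype.card G : ℝ) ≠ 0 := by exact_mod_cast Fintype.card_ne_zero
  rw [Epost_stdPost_eq_sum, Finset.sum_congr rfl fun φ _ => hterm φ, ← Finset.mul_sum,
    Finset.sum_fiberwise, Finset.sum_const, Finset.card_univ, nsmul_eq_mul]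
  field_simp

end Covariance

section Optimum

variable {d : ℕ} {X Y T : Type*} [Fintype X] [Fintype Y] [Fintype T]
  {f : X → Y → ℝ} {α : T → X → ℝ} {E : X → Mat d}

lemma Δconst_nonneg (hf : ∀ x y, 0 ≤ f x y) (hE : ∀ x, (E x).PosSemidef) : 0 ≤ Δconst f E :=
  Finset.sum_nonneg fun x _ => Finset.sum_nonneg fun y _ =>
    mul_nonneg (hf x y) (by simpa using (Complex.le_def.mp (hE x).trace_nonneg).1)

omit [Fintype X] in
lemma card_pow_card_sub_one_pos [Nonempty (T → Y)] :
    0 < (Fintype.card Y : ℝ) ^ (Fintype.card T - 1) := by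
  rcases isEmpty_or_nonempty T with hT | ⟨⟨t⟩⟩
  · simp [Fintype.card_eq_zero]
  · have : Nonempty Y := ⟨Classical.arbitrary (T → Y) t⟩
    positivity

omit [Fintype X] [Fintype T] in
lemma isPostProc_stdPost [DecidableEq Y] : IsPostProc (stdPost : T → Y → (T → Y) → ℝ) :=
  ⟨fun t y φ => by unfold stdPost; split <;> norm_num, fun t φ => by simp [stdPost]⟩

def EpostValues (f : X → Y → ℝ) (α : T → X → ℝ) (E : X → Mat d) : Set ℝ :=
  {p | ∃ (n : ℕ) (M : Fin n → Mat d) (ν : T → Y → Fin n → ℝ),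
    IsMeasurement M ∧ IsPostProc ν ∧ p = Epost f α E M ν}

lemma EpostMax_eq_sSup : EpostMax f α E = sSup (EpostValues f α E) :=
  rfl

lemma Epost_mem_EpostValues {Z : Type*} [Fintype Z] {M : Z → Mat d} {ν : T → Y → Z → ℝ}
    (hM : IsMeasurement M) (hν : IsPostProc ν) : Epost f α E M ν ∈ EpostValues f α E := by
  let e := (Fintype.equivFin Z).symm
  refine ⟨Fintype.card Z, M ∘ e, fun t y => ν t y ∘ e,
    ⟨fun z => hM.1 (e z), by rw [← hM.2]; exact e.sum_comp M⟩,
    ⟨fun t y z => hν.1 t y (e z), fun t z => hν.2 t (e z)⟩, ?_⟩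
  unfold Epost
  refine Finset.sum_congr rfl fun x _ => Finset.sum_congr rfl fun y _ =>
    Finset.sum_congr rfl fun t _ => ?_
  exact (e.sum_comp fun z => f x y * α t x * ν t y z * (E x * M z).trace.re).symm

end Optimum

theorem stmt15_general {d : ℕ} {G X Y T : Type} [Group G] [Fintype G]
    [Fintype X] [Fintype Y] [Fintype T]
    [MulAction G X] [MulAction G Y] [MulAction G T]
    (f : X → Y → ℝ) (hf : IsScore f)
    (α : T → X → ℝ)
    (hfinv : ∀ (g : G) (x : X) (y : Y), f (g • x) (g • y) = f x y)
    (hαinv : ∀ (g : G) (t : T) (x : X), α (g • t) (g • x) = α t x)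
    (E : X → Mat d) (hE : IsStateEnsemble E)
    (U : G → Mat d)
    (hU : ∀ g, U g * (U g)ᴴ = 1 ∧ (U g)ᴴ * U g = 1)
    (hcov : ∀ (g : G) (x : X), U g * E x * (U g)ᴴ = E (g • x))
    (hactmul : ∀ (g g' : G) (A : Mat d),
      U (g * g') * A * (U (g * g'))ᴴ = U g * (U g' * A * (U g')ᴴ) * (U g)ᴴ)
    (hirr : ∀ A : Mat d, (∀ g, U g * A * (U g)ᴴ = A) → ∃ c : ℂ, A = c • (1 : Mat d))
    (hΔ : Δconst f E ≠ 0)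
    (Λ : ℝ)
    (hΛ : IsGreatest {l : ℝ | ∃ (φ : T → Y) (v : Fin d → ℂ),
      v ≠ 0 ∧ (auxEnsPost f α E φ).mulVec v = (l : ℂ) • v} Λ) :
    EpostMax f α E
      = d * (Fintype.card Y : ℝ) ^ (Fintype.card T - 1) * Δconst f E * Λ := by
  classical
  obtain ⟨φ₀, v, hv, hφ₀⟩ := hΛ.1
  have : Nonempty (T → Y) := ⟨φ₀⟩
  set c := (Fintype.card Y : ℝ) ^ (Fintype.card T - 1) * Δconst f E
  have hc : 0 < c := mul_pos card_pow_card_sub_one_pos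
    ((Δconst_nonneg (fun x y => (hf x y).1) hE.1).lt_of_ne' hΔ)
  have heig (φ : T → Y) (l : ℝ) (w : Fin d → ℂ) (hw : w ≠ 0)
      (hl : scoreOp f α E φ *ᵥ w = (l : ℂ) • w) : l ≤ c * Λ := by
    refine (inv_mul_le_iff₀ hc).mp (hΛ.2 ⟨φ, w, hw, ?_⟩)
    rwa [auxEnsPost_eq_inv_smul_scoreOp, Matrix.inv_smul_mulVec_eq_iff hc.ne',
      mul_inv_cancel_left₀ hc.ne']
  rw [auxEnsPost_eq_inv_smul_scoreOp, Matrix.inv_smul_mulVec_eq_iff hc.ne'] at hφ₀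
  obtain ⟨P, hP, hP1, hAP⟩ := Matrix.exists_posSemidef_trace_eq_one_of_mulVec_eq hv hφ₀
  suffices h : IsGreatest (EpostValues f α E) (d * (c * Λ)) by
    rw [EpostMax_eq_sSup, h.csSup_eq]
    ring
  refine ⟨?_, ?_⟩
  · have h := Epost_mem_EpostValues (f := f) (α := α) (E := E)
      (isMeasurement_twirlMeas (fun g => (hU g).2) hactmul hirr hP hP1 φ₀) isPostProc_stdPost
    rwa [Epost_twirlMeas hfinv hαinv (fun g => (hU g).2) hcov, hAP, Complex.ofReal_re] at h
  · rintro p ⟨n, M, ν, hM, hν, rfl⟩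
    rw [Epost_eq_Epost_effectiveMeas M hν]
    exact Epost_stdPost_le (fun x => (hE.1 x).isHermitian) heig (isMeasurement_effectiveMeas hM hν)

theorem stmt15 {d : ℕ} {G X Y T : Type} [Group G] [Fintype G]
    [Fintype X] [Fintype Y] [Fintype T] [DecidableEq T]
    [MulAction G X] [MulAction G Y] [MulAction G T]
    (f : X → Y → ℝ) (hf : IsScore f)
    (α : T → X → ℝ) (hα : IsPartialInfo α)
    (hfinv : ∀ (g : G) (x : X) (y : Y), f (g • x) (g • y) = f x y)
    (hαinv : ∀ (g : G) (t : T) (x : X), α (g • t) (g • x) = α t x)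
    (E : X → Mat d) (hE : IsStateEnsemble E)
    (U : G → Mat d)
    (hU : ∀ g, U g * (U g)ᴴ = 1 ∧ (U g)ᴴ * U g = 1)
    (hcov : ∀ (g : G) (x : X), U g * E x * (U g)ᴴ = E (g • x))
    (hact1 : ∀ A : Mat d, U 1 * A * (U 1)ᴴ = A)
    (hactmul : ∀ (g g' : G) (A : Mat d),
      U (g * g') * A * (U (g * g'))ᴴ = U g * (U g' * A * (U g')ᴴ) * (U g)ᴴ)
    (hirr : ∀ A : Mat d, (∀ g, U g * A * (U g)ᴴ = A) → ∃ c : ℂ, A = c • (1 : Mat d))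
    (hΔ : Δconst f E ≠ 0)
    (Λ : ℝ)
    (hΛ : IsGreatest {l : ℝ | ∃ (φ : T → Y) (v : Fin d → ℂ),
      v ≠ 0 ∧ (auxEnsPost f α E φ).mulVec v = (l : ℂ) • v} Λ) :
    EpostMax f α E
      = d * (Fintype.card Y : ℝ) ^ (Fintype.card T - 1) * Δconst f E * Λ :=
  stmt15_general f hf α hfinv hαinv E hE U hU hcov hactmul hirr hΔ Λ hΛ
end
end

section
/- Qubit discrimination with exclusion of one wrong option: Fix θ ∈ (0, π/2], let a = (cos(θ/2), sin(θ/2), 0) and b = (cos(θ/2), −sin(θ/2), 0) in ℝ³, and let X = Y = T = {+a, −a, +b, −b}. Define the state ensemble on ℂ² by 𝓔(x) = (1/8)(𝟙 + x·σ), where x·σ = x₁σ₁ + x₂σ₂ + x₃σ₃ with σ₁, σ₂, σ₃ the Pauli matrices. Take the score function f_δ(x,y) = δ_{x,y} and the partial information map α_ex(t | x) = (1 − δ_{x,t})/3. Then E^prior_{f_δ,α_ex}(𝓔) = 2/3 and E^post_{f_δ,α_ex}(𝓔) = (1/12)·(4 + √(10 + 6·cos θ)). -/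
open scoped BigOperators
open Matrix
open scoped ComplexOrder

noncomputable section

def pauli1 : Mat 2 := !![0, 1; 1, 0]
def pauli2 : Mat 2 := !![0, -Complex.I; Complex.I, 0]
def pauli3 : Mat 2 := !![1, 0; 0, -1]

def dotPauli (v : Fin 3 → ℝ) : Mat 2 :=
  (v 0 : ℂ) • pauli1 + (v 1 : ℂ) • pauli2 + (v 2 : ℂ) • pauli3

def labelVec (θ : ℝ) : Fin 4 → Fin 3 → ℝ :=
  ![![Real.cos (θ / 2), Real.sin (θ / 2), 0],
    -![Real.cos (θ / 2), Real.sin (θ / 2), 0],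
    ![Real.cos (θ / 2), -Real.sin (θ / 2), 0],
    -![Real.cos (θ / 2), -Real.sin (θ / 2), 0]]

def qubitEns (θ : ℝ) : Fin 4 → Mat 2 :=
  fun x => (8 : ℝ)⁻¹ • ((1 : Mat 2) + dotPauli (labelVec θ x))

def fdisc : Fin 4 → Fin 4 → ℝ := fun x y => if x = y then 1 else 0

def αex : Fin 4 → Fin 4 → ℝ := fun t x => (1 - if x = t then 1 else 0) / 3

/-!
Write `𝓔(x) = P(a_x) / 4`, where `P(v) = (𝟙 + v·σ) / 2` is the Bloch projector. Both values come
from operator bounds `A ≤ λ 𝟙`, turned into `tr[A M] ≤ λ tr M` and summed using `Σ tr M = 2`.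

With prior information each term is `α(t | y) tr[𝓔(y) N_t(y)] ≤ (1/3)(1/4) tr N_t(y)`, so the score
is at most `4 · 2 / 12`; for excluded `t`, measuring in the Bloch basis `{±a}` or `{±b}` that does
not contain `t` attains it.

With posterior information, for a fixed outcome `z` the best guess given `t` is the likeliest label
`y₁`, or the runner-up `y₂` when `t = y₁`. So `z` contributes at most `tr[(𝓔(y₁) + 𝓔(y₂)/3) M(z)]`,
and `𝓔(y₁) + 𝓔(y₂)/3 = (4 + (3a₁ + a₂)·σ) / 24 ≤ (4 + |3a₁ + a₂|) / 24`, where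
`|3a₁ + a₂|² = 10 + 6 a₁·a₂ ≤ 10 + 6 cos θ` because `cos θ ≥ 0`. Measuring along `±(3a + b)` and
guessing `±a`, or `±b` when `±a` is excluded, attains the bound.
-/

section Trace

variable {n : Type*} [Fintype n] [DecidableEq n]

lemma re_trace_mul_nonneg {A B : Matrix n n ℂ} (hA : A.PosSemidef) (hB : B.PosSemidef) :
    0 ≤ (A * B).trace.re := by
  open scoped MatrixOrder in
  obtain ⟨C, rfl⟩ := CStarAlgebra.nonneg_iff_eq_star_mul_self.mp hA.nonneg
  rw [Matrix.mul_assoc, Matrix.trace_mul_comm]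
  exact (Complex.nonneg_iff.mp (hB.mul_mul_conjTranspose_same C).trace_nonneg).1

lemma re_trace_mul_le {A M : Matrix n n ℂ} {c : ℝ}
    (hA : (c • 1 - A).PosSemidef) (hM : M.PosSemidef) :
    (A * M).trace.re ≤ c * M.trace.re := by
  have := re_trace_mul_nonneg hA hM
  simp only [Matrix.sub_mul, Matrix.smul_mul, Matrix.one_mul, Matrix.trace_sub,
    Matrix.trace_smul, Complex.sub_re, Complex.smul_re, smul_eq_mul] at this
  linarith

end Trace

lemma IsMeasurement.sum_re_trace {d : ℕ} {Z : Type*} [Fintype Z] {M : Z → Mat d}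
    (hM : IsMeasurement M) : ∑ z, (M z).trace.re = d := by
  rw [← Complex.re_sum, ← Matrix.trace_sum, hM.2, Matrix.trace_one]
  simp

section Pauli

lemma dotPauli_eq (v : Fin 3 → ℝ) :
    dotPauli v = !![(v 2 : ℂ), v 0 - v 1 * Complex.I; v 0 + v 1 * Complex.I, -(v 2 : ℂ)] := by
  ext i j
  fin_cases i <;> fin_cases j <;> simp [dotPauli, pauli1, pauli2, pauli3, sub_eq_add_neg]

lemma dotPauli_add (v w : Fin 3 → ℝ) : dotPauli (v + w) = dotPauli v + dotPauli w := by
  simp only [dotPauli, Pi.add_apply, Complex.ofReal_add]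
  module

lemma dotPauli_smul (r : ℝ) (v : Fin 3 → ℝ) : dotPauli (r • v) = r • dotPauli v := by
  simp only [dotPauli, Pi.smul_apply, smul_eq_mul, Complex.ofReal_mul]
  module

lemma dotPauli_neg (v : Fin 3 → ℝ) : dotPauli (-v) = -dotPauli v := by
  simpa using dotPauli_smul (-1) v

lemma dotPauli_isHermitian (v : Fin 3 → ℝ) : (dotPauli v).IsHermitian := by
  rw [Matrix.IsHermitian, dotPauli_eq]
  ext i j
  fin_cases i <;> fin_cases j <;> simp [Complex.ext_iff]

lemma dotPauli_mul_self (v : Fin 3 → ℝ) : dotPauli v * dotPauli v = (v ⬝ᵥ v) • (1 : Mat 2) := by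
  rw [dotPauli_eq]
  ext i j
  fin_cases i <;> fin_cases j <;>
    simp [Matrix.mul_apply, dotProduct, Fin.sum_univ_three, Complex.ext_iff] <;>
    (try constructor) <;> ring

lemma trace_dotPauli (v : Fin 3 → ℝ) : (dotPauli v).trace = 0 := by
  simp [dotPauli_eq, Matrix.trace_fin_two]

lemma trace_dotPauli_mul_dotPauli (v w : Fin 3 → ℝ) :
    (dotPauli v * dotPauli w).trace = (2 * (v ⬝ᵥ w) : ℝ) := by
  simp [dotPauli_eq, Matrix.trace_fin_two, dotProduct, Fin.sum_univ_three,
    Complex.ext_iff]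
  constructor <;> ring

/-- For `r > 0`, `2r (r + v·σ) = (r + v·σ)² + (r² - |v|²)`, a sum of positive operators. -/
lemma posSemidef_smul_one_add_dotPauli {r : ℝ} (hr : 0 < r) {v : Fin 3 → ℝ}
    (hv : v ⬝ᵥ v ≤ r ^ 2) : (r • (1 : Mat 2) + dotPauli v).PosSemidef := by
  set A := r • (1 : Mat 2) + dotPauli v
  have hAH : A.IsHermitian :=
    (Matrix.isHermitian_one.smul (IsSelfAdjoint.all r)).add (dotPauli_isHermitian v)
  have hsq : A * A = (2 * r) • A - (r ^ 2 - v ⬝ᵥ v) • (1 : Mat 2) := by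
    simp only [A, add_mul, mul_add, dotPauli_mul_self, Matrix.smul_mul, Matrix.mul_smul,
      Matrix.one_mul, Matrix.mul_one, smul_smul]
    module
  have hA : A = (2 * r)⁻¹ • (Aᴴ * A + (r ^ 2 - v ⬝ᵥ v) • (1 : Mat 2)) := by
    rw [hAH.eq, hsq, sub_add_cancel, smul_smul, inv_mul_cancel₀ (by positivity), one_smul]
  rw [hA]
  exact ((Matrix.posSemidef_conjTranspose_mul_self A).add
    (Matrix.PosSemidef.one.smul (sub_nonneg.mpr hv))).smul (by positivity)

end Pauli

section Exclusion

variable {X : Type*} [Fintype X] [DecidableEq X]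

lemma exists_ne_forall_ne_le [Nontrivial X] (p : X → ℝ) :
    ∃ y₁ y₂, y₁ ≠ y₂ ∧ ∀ t y, y ≠ t → p y ≤ p (if t = y₁ then y₂ else y₁) := by
  obtain ⟨y₁, hy₁⟩ := Finite.exists_max p
  have : Nonempty {y // y ≠ y₁} := nonempty_subtype.mpr (exists_ne y₁)
  obtain ⟨⟨y₂, hne⟩, hy₂⟩ := Finite.exists_max fun y : {y // y ≠ y₁} => p y
  refine ⟨y₁, y₂, hne.symm, fun t y hyt => ?_⟩
  split_ifs with ht
  · exact hy₂ ⟨y, ht ▸ hyt⟩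
  · exact hy₁ y

lemma sum_apply_ite_eq (p : X → ℝ) (y₁ y₂ : X) :
    ∑ t, p (if t = y₁ then y₂ else y₁) = (Fintype.card X - 1) * p y₁ + p y₂ := by
  have hcard : 1 ≤ Fintype.card X := Fintype.card_pos_iff.mpr ⟨y₁⟩
  simp [apply_ite p, Finset.sum_ite, Finset.filter_ne', Finset.filter_eq',
    Finset.card_erase_of_mem, Nat.cast_sub hcard]
  ring

/-- With the true label excluded, the best guess is the likeliest label `y₁`, unless `y₁` is the
excluded one, in which case it is the runner-up `y₂`. -/
lemma exists_sum_exclusion_le [Nontrivial X] {p : X → ℝ} (hp : ∀ y, 0 ≤ p y) {w : ℝ} (hw : 0 ≤ w)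
    {ν : X → X → ℝ} (hν₀ : ∀ t y, 0 ≤ ν t y) (hν₁ : ∀ t, ∑ y, ν t y = 1) :
    ∃ y₁ y₂, y₁ ≠ y₂ ∧ ∑ t, ∑ y, ν t y * ((if y = t then 0 else w) * p y)
      ≤ w * ((Fintype.card X - 1) * p y₁ + p y₂) := by
  obtain ⟨y₁, y₂, hne, hle⟩ := exists_ne_forall_ne_le p
  refine ⟨y₁, y₂, hne, ?_⟩
  have hterm : ∀ t y, (if y = t then 0 else w) * p y ≤ w * p (if t = y₁ then y₂ else y₁) := by
    intro t y
    by_cases hyt : y = t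
    · rw [if_pos hyt, zero_mul]; exact mul_nonneg hw (hp _)
    · rw [if_neg hyt]; exact mul_le_mul_of_nonneg_left (hle t y hyt) hw
  calc ∑ t, ∑ y, ν t y * ((if y = t then 0 else w) * p y)
      ≤ ∑ t, ∑ y, ν t y * (w * p (if t = y₁ then y₂ else y₁)) :=
        Finset.sum_le_sum fun t _ => Finset.sum_le_sum fun y _ =>
          mul_le_mul_of_nonneg_left (hterm t y) (hν₀ t y)
    _ = w * ((Fintype.card X - 1) * p y₁ + p y₂) := by
        simp only [← Finset.sum_mul, hν₁, one_mul, ← Finset.mul_sum, sum_apply_ite_eq]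

end Exclusion

section Kronecker

variable {d : ℕ} {X T Z : Type*} [Fintype X] [DecidableEq X] [Fintype T] [Fintype Z]

lemma Eprior_kronecker (α : T → X → ℝ) (E : X → Mat d) (N : T → X → Mat d) :
    Eprior (fun x y => if x = y then 1 else 0) α E N
      = ∑ t, ∑ y, α t y * (E y * N t y).trace.re := by
  simp only [Eprior, ite_mul, one_mul, zero_mul, Finset.sum_ite_irrel, Finset.sum_const_zero,
    Finset.sum_ite_eq, Finset.mem_univ, if_true]
  exact Finset.sum_comm

lemma Epost_kronecker (α : T → X → ℝ) (E : X → Mat d) (M : Z → Mat d) (ν : T → X → Z → ℝ) :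
    Epost (fun x y => if x = y then 1 else 0) α E M ν
      = ∑ z, ∑ t, ∑ y, ν t y z * (α t y * (E y * M z).trace.re) := by
  simp only [Epost, ite_mul, one_mul, zero_mul, Finset.sum_ite_irrel, Finset.sum_const_zero,
    Finset.sum_ite_eq, Finset.mem_univ, if_true]
  rw [Finset.sum_comm]
  refine (Finset.sum_congr rfl fun t _ => Finset.sum_comm).trans ?_
  rw [Finset.sum_comm]
  simp only [mul_left_comm, mul_assoc]

lemma Eprior_kronecker_le {α : T → X → ℝ} {E : X → Mat d} {N : T → X → Mat d} {w c : ℝ}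
    (hα : ∀ t x, 0 ≤ α t x ∧ α t x ≤ w) (hE : ∀ x, (E x).PosSemidef)
    (hEc : ∀ x, (c • 1 - E x).PosSemidef) (hN : ∀ t, IsMeasurement (N t)) :
    Eprior (fun x y => if x = y then 1 else 0) α E N ≤ Fintype.card T * (w * c * d) := by
  have hterm : ∀ t y, α t y * (E y * N t y).trace.re ≤ w * (c * (N t y).trace.re) := by
    intro t y
    have h₀ := re_trace_mul_nonneg (hE y) ((hN t).1 y)
    have h₁ := re_trace_mul_le (hEc y) ((hN t).1 y)
    calc α t y * (E y * N t y).trace.re ≤ α t y * (c * (N t y).trace.re) :=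
          mul_le_mul_of_nonneg_left h₁ (hα t y).1
      _ ≤ w * (c * (N t y).trace.re) := mul_le_mul_of_nonneg_right (hα t y).2 (h₀.trans h₁)
  calc Eprior (fun x y => if x = y then 1 else 0) α E N
      ≤ ∑ t : T, ∑ y, w * (c * (N t y).trace.re) := by
        rw [Eprior_kronecker]
        exact Finset.sum_le_sum fun t _ => Finset.sum_le_sum fun y _ => hterm t y
    _ = Fintype.card T * (w * c * d) := by
        simp [← Finset.mul_sum, (hN _).sum_re_trace, mul_assoc]

lemma Epost_kronecker_exclusion_le [Nontrivial X] {E : X → Mat d} {M : Z → Mat d}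
    {ν : X → X → Z → ℝ} {w c : ℝ} (hw : 0 ≤ w) (hE : ∀ x, (E x).PosSemidef)
    (hpair : ∀ y₁ y₂, y₁ ≠ y₂ →
      (c • 1 - w • ((Fintype.card X - 1 : ℝ) • E y₁ + E y₂)).PosSemidef)
    (hM : IsMeasurement M) (hν : IsPostProc ν) :
    Epost (fun x y => if x = y then 1 else 0) (fun t x => if x = t then 0 else w) E M ν
      ≤ c * d := by
  have hz : ∀ z, ∑ t, ∑ y, ν t y z * ((if y = t then 0 else w) * (E y * M z).trace.re)
      ≤ c * (M z).trace.re := by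
    intro z
    obtain ⟨y₁, y₂, hne, hle⟩ := exists_sum_exclusion_le
      (fun y => re_trace_mul_nonneg (hE y) (hM.1 z)) hw (fun t y => hν.1 t y z) (fun t => hν.2 t z)
    refine hle.trans (le_of_eq_of_le ?_ (re_trace_mul_le (hpair y₁ y₂ hne) (hM.1 z)))
    simp only [Matrix.smul_mul, Matrix.add_mul, Matrix.trace_smul, Matrix.trace_add,
      Complex.smul_re, Complex.add_re, smul_eq_mul]
  rw [Epost_kronecker, ← hM.sum_re_trace, Finset.mul_sum]
  exact Finset.sum_le_sum fun z _ => hz z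

end Kronecker

section Bloch

def blochProj (v : Fin 3 → ℝ) : Mat 2 := (2 : ℝ)⁻¹ • (1 + dotPauli v)

lemma posSemidef_blochProj {v : Fin 3 → ℝ} (hv : v ⬝ᵥ v ≤ 1) : (blochProj v).PosSemidef := by
  have h := posSemidef_smul_one_add_dotPauli one_pos (v := v) (by simpa using hv)
  rw [one_smul] at h
  exact h.smul (by norm_num)

lemma blochProj_add_blochProj_neg (v : Fin 3 → ℝ) : blochProj v + blochProj (-v) = 1 := by
  simp only [blochProj, dotPauli_neg]
  module

lemma isMeasurement_blochProj {v : Fin 3 → ℝ} (hv : v ⬝ᵥ v ≤ 1) :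
    IsMeasurement ![blochProj v, blochProj (-v)] := by
  refine ⟨fun z => ?_, by simp [Fin.sum_univ_two, blochProj_add_blochProj_neg]⟩
  fin_cases z
  · exact posSemidef_blochProj hv
  · exact posSemidef_blochProj (by simpa using hv)

lemma re_trace_blochProj_mul_blochProj (v w : Fin 3 → ℝ) :
    (blochProj v * blochProj w).trace.re = (1 + v ⬝ᵥ w) / 2 := by
  simp [blochProj, add_mul, mul_add, Matrix.trace_add, trace_dotPauli,
    trace_dotPauli_mul_dotPauli]
  ring

end Bloch

section Ensemble

variable {θ : ℝ}

lemma qubitEns_eq (θ : ℝ) (x : Fin 4) :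
    qubitEns θ x = (4 : ℝ)⁻¹ • blochProj (labelVec θ x) := by
  rw [qubitEns, blochProj, smul_smul]
  norm_num

lemma labelVec_one (θ : ℝ) : labelVec θ 1 = -labelVec θ 0 := rfl

lemma labelVec_three (θ : ℝ) : labelVec θ 3 = -labelVec θ 2 := rfl

lemma labelVec_dotProduct_self (θ : ℝ) (x : Fin 4) : labelVec θ x ⬝ᵥ labelVec θ x = 1 := by
  have := Real.sin_sq_add_cos_sq (θ / 2)
  fin_cases x <;> simp [labelVec, dotProduct, Fin.sum_univ_three] <;> linarith

lemma labelVec_zero_dotProduct_two (θ : ℝ) : labelVec θ 0 ⬝ᵥ labelVec θ 2 = Real.cos θ := by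
  have h₁ := Real.sin_sq_add_cos_sq (θ / 2)
  have h₂ : Real.cos θ = 2 * Real.cos (θ / 2) ^ 2 - 1 := by rw [← Real.cos_two_mul]; ring_nf
  simp [labelVec, dotProduct, Fin.sum_univ_three]
  linear_combination -h₁ - h₂

lemma labelVec_dotProduct_le (hθ : 0 ≤ Real.cos θ) {x y : Fin 4} (hxy : x ≠ y) :
    labelVec θ x ⬝ᵥ labelVec θ y ≤ Real.cos θ := by
  have h₀₂ := labelVec_zero_dotProduct_two θ
  fin_cases x <;> fin_cases y <;>
    simp_all [labelVec_one, labelVec_three, dotProduct_comm, labelVec_dotProduct_self] <;>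
    linarith

lemma posSemidef_qubitEns (θ : ℝ) (x : Fin 4) : (qubitEns θ x).PosSemidef := by
  rw [qubitEns_eq]
  exact (posSemidef_blochProj (labelVec_dotProduct_self θ x).le).smul (by norm_num)

lemma re_trace_qubitEns_mul_blochProj (θ : ℝ) (x : Fin 4) (w : Fin 3 → ℝ) :
    (qubitEns θ x * blochProj w).trace.re = (1 + labelVec θ x ⬝ᵥ w) / 8 := by
  rw [qubitEns_eq, Matrix.smul_mul, Matrix.trace_smul, Complex.smul_re,
    re_trace_blochProj_mul_blochProj, smul_eq_mul]
  ring

end Ensemble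

lemma αex_eq : αex = fun t x => if x = t then 0 else 3⁻¹ := by
  ext t x
  unfold αex
  split_ifs <;> norm_num

section Prior

lemma Eprior_le {θ : ℝ} {N : Fin 4 → Fin 4 → Mat 2} (hN : ∀ t, IsMeasurement (N t)) :
    Eprior fdisc αex (qubitEns θ) N ≤ 2 / 3 := by
  have hα : ∀ t x, 0 ≤ αex t x ∧ αex t x ≤ 3⁻¹ := by
    intro t x
    simp only [αex_eq]
    split_ifs <;> norm_num
  have hE : ∀ x, ((4 : ℝ)⁻¹ • 1 - qubitEns θ x).PosSemidef := by
    intro x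
    rw [qubitEns_eq, ← blochProj_add_blochProj_neg (labelVec θ x), smul_add, add_sub_cancel_left]
    refine (posSemidef_blochProj ?_).smul (by norm_num)
    simpa using (labelVec_dotProduct_self θ x).le
  calc Eprior fdisc αex (qubitEns θ) N ≤ Fintype.card (Fin 4) * (3⁻¹ * 4⁻¹ * (2 : ℕ)) :=
        Eprior_kronecker_le hα (posSemidef_qubitEns θ) hE hN
    _ = 2 / 3 := by norm_num

/-- Labels `0, 1` are `±a` and `2, 3` are `±b`; when `t` is excluded, measure in the Bloch basis
of the pair not containing `t`. -/
def priorMeas (θ : ℝ) (t y : Fin 4) : Mat 2 :=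
  if (y : ℕ) / 2 = (t : ℕ) / 2 then 0 else blochProj (labelVec θ y)

lemma isMeasurement_priorMeas (θ : ℝ) (t : Fin 4) : IsMeasurement (priorMeas θ t) := by
  refine ⟨fun y => ?_, ?_⟩
  · unfold priorMeas
    split_ifs
    · exact .zero
    · exact posSemidef_blochProj (labelVec_dotProduct_self θ y).le
  · fin_cases t <;>
      simp [priorMeas, Fin.sum_univ_four, labelVec_one, labelVec_three, blochProj_add_blochProj_neg]

lemma Eprior_priorMeas (θ : ℝ) : Eprior fdisc αex (qubitEns θ) (priorMeas θ) = 2 / 3 := by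
  have hterm : ∀ t y : Fin 4, αex t y * (qubitEns θ y * priorMeas θ t y).trace.re
      = if (y : ℕ) / 2 = (t : ℕ) / 2 then 0 else 12⁻¹ := by
    intro t y
    unfold priorMeas
    split_ifs with h
    · simp
    · have hyt : y ≠ t := by rintro rfl; exact h rfl
      simp only [re_trace_qubitEns_mul_blochProj, labelVec_dotProduct_self, αex_eq, if_neg hyt]
      norm_num
  unfold fdisc
  rw [Eprior_kronecker]
  simp [hterm, Fin.sum_univ_four]
  norm_num

theorem EpriorMax_eq (θ : ℝ) : EpriorMax fdisc αex (qubitEns θ) = 2 / 3 :=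
  IsGreatest.csSup_eq ⟨⟨priorMeas θ, isMeasurement_priorMeas θ, (Eprior_priorMeas θ).symm⟩,
    by rintro _ ⟨N, hN, rfl⟩; exact Eprior_le hN⟩

end Prior

lemma isPostProc_ite_eq {T Y Z : Type*} [Fintype Y] [DecidableEq Y] (g : T → Z → Y) :
    IsPostProc fun t y z => if y = g t z then (1 : ℝ) else 0 :=
  ⟨fun _ _ _ => ite_nonneg zero_le_one le_rfl, fun t z => by simp⟩

lemma dotProduct_self_smul_add {n : Type*} [Fintype n] (c : ℝ) (v w : n → ℝ) :
    (c • v + w) ⬝ᵥ (c • v + w) = c ^ 2 * (v ⬝ᵥ v) + 2 * c * (v ⬝ᵥ w) + w ⬝ᵥ w := by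
  simp only [add_dotProduct, dotProduct_add, smul_dotProduct, dotProduct_smul, smul_eq_mul,
    dotProduct_comm w v]
  ring

section Posterior

variable {θ : ℝ}

lemma qubitEns_pair_le (hθ : 0 ≤ Real.cos θ) {y₁ y₂ : Fin 4} (hne : y₁ ≠ y₂) :
    (((4 + √(10 + 6 * Real.cos θ)) / 24) • 1 - (3⁻¹ : ℝ) •
      ((Fintype.card (Fin 4) - 1 : ℝ) • qubitEns θ y₁ + qubitEns θ y₂)).PosSemidef := by
  set S := √(10 + 6 * Real.cos θ)
  set v := (3 : ℝ) • labelVec θ y₁ + labelVec θ y₂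
  have hS : 0 < S := Real.sqrt_pos.mpr (by linarith)
  have hv : (-v) ⬝ᵥ (-v) ≤ S ^ 2 := by
    rw [Real.sq_sqrt (by linarith), neg_dotProduct, dotProduct_neg, neg_neg,
      dotProduct_self_smul_add, labelVec_dotProduct_self, labelVec_dotProduct_self]
    linarith [labelVec_dotProduct_le hθ hne]
  have h : ((4 + S) / 24) • 1 - (3⁻¹ : ℝ) •
      ((Fintype.card (Fin 4) - 1 : ℝ) • qubitEns θ y₁ + qubitEns θ y₂)
      = (24 : ℝ)⁻¹ • (S • 1 + dotPauli (-v)) := by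
    simp only [Fintype.card_fin, qubitEns, v, dotPauli_neg, dotPauli_add, dotPauli_smul]
    module
  rw [h]
  exact (posSemidef_smul_one_add_dotPauli hS hv).smul (by norm_num)

lemma Epost_le (hθ : 0 ≤ Real.cos θ) {n : ℕ} {M : Fin n → Mat 2}
    {ν : Fin 4 → Fin 4 → Fin n → ℝ} (hM : IsMeasurement M) (hν : IsPostProc ν) :
    Epost fdisc αex (qubitEns θ) M ν ≤ 1 / 12 * (4 + √(10 + 6 * Real.cos θ)) := by
  rw [αex_eq]
  calc Epost fdisc _ (qubitEns θ) M ν ≤ (4 + √(10 + 6 * Real.cos θ)) / 24 * (2 : ℕ) :=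
        Epost_kronecker_exclusion_le (by norm_num) (posSemidef_qubitEns θ)
          (fun _ _ => qubitEns_pair_le hθ) hM hν
    _ = 1 / 12 * (4 + √(10 + 6 * Real.cos θ)) := by push_cast; ring

/-- Bloch vector of the top eigenvector of `𝓔(a) + 𝓔(b)/3`. -/
def postVec (θ : ℝ) : Fin 3 → ℝ :=
  (√(10 + 6 * Real.cos θ))⁻¹ • ((3 : ℝ) • labelVec θ 0 + labelVec θ 2)

lemma dotProduct_self_three_smul_add (θ : ℝ) :
    ((3 : ℝ) • labelVec θ 0 + labelVec θ 2) ⬝ᵥ ((3 : ℝ) • labelVec θ 0 + labelVec θ 2)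
      = 10 + 6 * Real.cos θ := by
  rw [dotProduct_self_smul_add, labelVec_dotProduct_self, labelVec_dotProduct_self,
    labelVec_zero_dotProduct_two]
  ring

lemma postVec_dotProduct_self (θ : ℝ) : postVec θ ⬝ᵥ postVec θ = 1 := by
  have h : 0 < 10 + 6 * Real.cos θ := by linarith [Real.neg_one_le_cos θ]
  rw [postVec, smul_dotProduct, dotProduct_smul, dotProduct_self_three_smul_add, smul_eq_mul,
    smul_eq_mul, ← mul_assoc, ← sq, inv_pow, Real.sq_sqrt h.le, inv_mul_cancel₀ h.ne']

/-- Outcome `0` (Bloch vector `postVec θ`) points to `a` and outcome `1` to `-a`; when that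
label is the excluded one, guess `b`, resp. `-b`, instead. -/
def postGuess : Fin 4 → Fin 2 → Fin 4 := ![![2, 1], ![0, 3], ![0, 1], ![0, 1]]

lemma Epost_postGuess (θ : ℝ) :
    Epost fdisc αex (qubitEns θ) ![blochProj (postVec θ), blochProj (-postVec θ)]
        (fun t y z => if y = postGuess t z then 1 else 0)
      = 1 / 12 * (4 + √(10 + 6 * Real.cos θ)) := by
  have h : 0 < 10 + 6 * Real.cos θ := by linarith [Real.neg_one_le_cos θ]
  have key : 3 * (labelVec θ 0 ⬝ᵥ postVec θ) + labelVec θ 2 ⬝ᵥ postVec θ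
      = √(10 + 6 * Real.cos θ) := by
    have hlin : 3 * (labelVec θ 0 ⬝ᵥ postVec θ) + labelVec θ 2 ⬝ᵥ postVec θ
        = ((3 : ℝ) • labelVec θ 0 + labelVec θ 2) ⬝ᵥ postVec θ := by
      simp [add_dotProduct, smul_dotProduct]
    rw [hlin, postVec, dotProduct_smul, dotProduct_self_three_smul_add, smul_eq_mul,
      inv_mul_eq_iff_eq_mul₀ (Real.sqrt_pos.mpr h).ne', Real.mul_self_sqrt h.le]
  unfold fdisc
  rw [Epost_kronecker]
  simp only [ite_mul, one_mul, zero_mul, Finset.sum_ite_eq', Finset.mem_univ, if_true]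
  simp [Fin.sum_univ_two, Fin.sum_univ_four, postGuess, αex_eq, re_trace_qubitEns_mul_blochProj,
    labelVec_one, labelVec_three]
  linear_combination key / 12

theorem EpostMax_eq (hθ : 0 ≤ Real.cos θ) :
    EpostMax fdisc αex (qubitEns θ) = 1 / 12 * (4 + √(10 + 6 * Real.cos θ)) :=
  IsGreatest.csSup_eq ⟨⟨2, _, _, isMeasurement_blochProj (postVec_dotProduct_self θ).le,
      isPostProc_ite_eq postGuess, (Epost_postGuess θ).symm⟩,
    by rintro _ ⟨n, M, ν, hM, hν, rfl⟩; exact Epost_le hθ hM hν⟩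

end Posterior

theorem stmt18 (θ : ℝ) (hθ : θ ∈ Set.Ioc 0 (Real.pi / 2)) :
    EpriorMax fdisc αex (qubitEns θ) = 2 / 3 ∧
    EpostMax fdisc αex (qubitEns θ)
        = (1 / 12) * (4 + Real.sqrt (10 + 6 * Real.cos θ)) :=
  ⟨EpriorMax_eq θ,
    EpostMax_eq (Real.cos_nonneg_of_mem_Icc ⟨by linarith [hθ.1, Real.pi_pos], hθ.2⟩)⟩
end
end
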